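/- Let C and D be categories, L : C ⥤ D and R : D ⥤ C functors, and adj : L ⊣ R an adjunction with unit η : 𝟭_C ⟶ L ⋙ R. Assume L is faithful. Let t : L ⋙ R ⟶ 𝟭_C and d : 𝟭_D ⟶ 𝟭_D be natural transformations such that: (i) for every object X of C, t.app X ≫ η.app X = R.map (d.app (L.obj X)), and (ii) d.app Y is an isomorphism for every object Y of D. Then for every object X of C the unit η.app X : X ⟶ R(L(X)) is an isomorphism, with inverse given explicitly by R.map (inv (d.app (L.obj X))) ≫ t.app X. In particular η : 𝟭_C ⟶ L ⋙ R is a natural isomorphism. -/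
import Mathlib


open CategoryTheory

/-- Categorical localization formula: if `L` is faithful,
`t ≫ η = R(d)` objectwise, and `d` is objectwise invertible, then the unit
`η` is invertible with inverse `R(d⁻¹) ≫ t`. -/
theorem unit_isIso_of_trace_euler
    {C D : Type*} [Category C] [Category D]
    (L : C ⥤ D) (R : D ⥤ C) (adj : L ⊣ R) [L.Faithful]
    (t : L ⋙ R ⟶ 𝟭 C) (d : 𝟭 D ⟶ 𝟭 D)
    (h1 : ∀ X : C, t.app X ≫ adj.unit.app X = R.map (d.app (L.obj X)))
    [h2 : ∀ Y : D, IsIso (d.app Y)] :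
    (∀ X : C,
      IsIso (adj.unit.app X) ∧
      adj.unit.app X ≫ (R.map (inv (d.app (L.obj X))) ≫ t.app X) = 𝟙 X ∧
      (R.map (inv (d.app (L.obj X))) ≫ t.app X) ≫ adj.unit.app X
        = 𝟙 (R.obj (L.obj X))) ∧
    IsIso adj.unit := by
  have key : ∀ X : C,
      adj.unit.app X ≫ (R.map (inv (d.app (L.obj X))) ≫ t.app X) = 𝟙 X ∧
      (R.map (inv (d.app (L.obj X))) ≫ t.app X) ≫ adj.unit.app X
        = 𝟙 (R.obj (L.obj X)) := by
    intro X
    have hsec : (R.map (inv (d.app (L.obj X))) ≫ t.app X) ≫ adj.unit.app X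
        = 𝟙 (R.obj (L.obj X)) := by
      rw [Category.assoc, h1, ← R.map_comp, IsIso.inv_hom_id, R.map_id]
      rfl
    refine ⟨?_, hsec⟩
    -- L.map (unit) is split mono via triangle identity, hence mono
    have hmono : Mono (L.map (adj.unit.app X)) := by
      have := adj.left_triangle_components X
      exact ⟨fun g h hgh => by
        have : g ≫ L.map (adj.unit.app X) ≫ adj.counit.app (L.obj X)
            = h ≫ L.map (adj.unit.app X) ≫ adj.counit.app (L.obj X) := by
          rw [← Category.assoc, ← Category.assoc, hgh]
        simpa [adj.left_triangle_components X] using this⟩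
    apply L.map_injective
    apply hmono.right_cancellation (f := L.map (adj.unit.app X))
    rw [← L.map_comp, ← L.map_comp, Category.assoc, hsec]
    simp
  have hiso : ∀ X : C, IsIso (adj.unit.app X) := fun X =>
    ⟨R.map (inv (d.app (L.obj X))) ≫ t.app X, (key X).1, (key X).2⟩
  exact ⟨fun X => ⟨hiso X, (key X).1, (key X).2⟩,
    NatIso.isIso_of_isIso_app adj.unit⟩
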